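/- arXiv:2601.08362 — 2 statements merged into one kernel-verified Lean document; each statement's English description precedes it below -/
import Mathlib

section
/- Let U ⊆ ℝ^m × S^n be open and let p,q ≥ 0 with p+q ≤ n. If the W-SOC holds uniformly on U ∩ M̃_{p,q}, then for every integer p' with 0 ≤ p' ≤ p the W-SOC holds at every z ∈ U ∩ M̃_{p',q}. -/
open scoped Classical RealInnerProductSpace
open Matrix Set

noncomputable section

abbrev Mat (n : ℕ) : Type := Matrix (Fin n) (Fin n) ℝ

abbrev Em (m : ℕ) : Type := EuclideanSpace ℝ (Fin m)

attribute [instance] Matrix.frobeniusNormedAddCommGroup Matrix.frobeniusNormedSpace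

/-- The trace (Frobenius) inner product `⟨A,B⟩ = tr(AᵀB)` on matrices; for symmetric
matrices this is `tr(AB)`. -/
def minner {n : ℕ} (A B : Mat n) : ℝ := (Aᵀ * B).trace

/-- `P` is an orthogonal matrix. -/
def IsOrthoMat {n : ℕ} (P : Mat n) : Prop := P * Pᵀ = 1 ∧ Pᵀ * P = 1

/-- `(P, lam)` is an eigenvalue decomposition of `A` with orthogonal `P` and
nonincreasing eigenvalue vector `lam`: `A = P·Diag(lam)·Pᵀ`. -/
def IsEigDecomp {n : ℕ} (A P : Mat n) (lam : Fin n → ℝ) : Prop :=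
  IsOrthoMat P ∧ Antitone lam ∧ A = P * Matrix.diagonal lam * Pᵀ

/-- The stratum `M_{p,q}` of symmetric matrices with exactly `p` positive and `q` negative
eigenvalues. -/
def stratum (n p q : ℕ) : Set (Mat n) :=
  {A | ∃ P lam, IsEigDecomp A P lam ∧
    {i : Fin n | 0 < lam i}.ncard = p ∧ {i : Fin n | lam i < 0}.ncard = q}

/-- The metric projection `Π₊` onto the positive semidefinite cone (defined through an
eigenvalue decomposition; the value is independent of the choice of decomposition). -/
noncomputable def piPlus {n : ℕ} (A : Mat n) : Mat n :=
  if h : ∃ P lam, IsEigDecomp A P lam then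
    h.choose * Matrix.diagonal (fun i => max (h.choose_spec.choose i) 0) * h.chooseᵀ
  else 0

variable {m n : ℕ}

/-- `G(z) = g(x) + y`. -/
def Gmap (g : Em m → Mat n) (z : Em m × Mat n) : Mat n := g z.1 + z.2

/-- The adjoint `∇g(x) : Sⁿ → ℝᵐ` of the derivative `g'(x)`, characterized by
`⟨∇g(x)H, v⟩ = ⟨H, g'(x)v⟩`. -/
def gradg (g : Em m → Mat n) (x : Em m) (H : Mat n) : Em m :=
  (EuclideanSpace.equiv (Fin m) ℝ).symm
    fun k => (Hᵀ * fderiv ℝ g x (EuclideanSpace.single k 1)).trace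

/-- The Lagrangian `L(x,y) = f(x) + ⟨y, g(x)⟩`. -/
def Lfun (f : Em m → ℝ) (g : Em m → Mat n) (x : Em m) (y : Mat n) : ℝ :=
  f x + minner y (g x)

/-- The Hessian `∇²ₓₓL(x,y)` of `x ↦ L(x,y)`, as a continuous linear map `ℝᵐ → ℝᵐ`. -/
def hessL (f : Em m → ℝ) (g : Em m → Mat n) (x : Em m) (y : Mat n) : Em m →L[ℝ] Em m :=
  fderiv ℝ (fun u => gradient (fun w => Lfun f g w y) u) x

/-- The KKT mapping `F(z) = (∇f(x) + ∇g(x)y, −g(x) + Π₊(G(z)))`. -/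
def KKTF (f : Em m → ℝ) (g : Em m → Mat n) (z : Em m × Mat n) : Em m × Mat n :=
  (gradient f z.1 + gradg g z.1 z.2, - g z.1 + piPlus (Gmap g z))

/-- The lifted stratum `M̃_{p,q} = {z = (x,y) ∈ ℝᵐ × Sⁿ : G(z) ∈ M_{p,q}}`. -/
def lstratum (g : Em m → Mat n) (p q : ℕ) : Set (Em m × Mat n) :=
  {z | z.2.IsSymm ∧ Gmap g z ∈ stratum n p q}

/-- The norm `‖(u,H)‖ = sqrt(‖u‖² + ‖H‖²)` on `ℝᵐ × Sⁿ` (Frobenius norm on matrices). -/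
def pnorm {m n : ℕ} (w : Em m × Mat n) : ℝ := Real.sqrt (‖w.1‖ ^ 2 + ‖w.2‖ ^ 2)

/-- The weak strict Robinson constraint qualification (W-SRCQ) at `z`:
`g'(x)[ℝᵐ] + {PBPᵀ : B ∈ Sⁿ, B_{βγ} = 0, B_{γγ} = 0} = Sⁿ`
(for any eigenvalue decomposition `(P, lam)` of `G(z)`; independent of the choice). -/
def WSRCQ (g : Em m → Mat n) (z : Em m × Mat n) : Prop :=
  ∀ P lam, IsEigDecomp (Gmap g z) P lam →
    ∀ C : Mat n, C.IsSymm →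
      ∃ (v : Em m) (B : Mat n), B.IsSymm ∧
        (∀ i j, lam i = 0 → lam j < 0 → B i j = 0) ∧
        (∀ i j, lam i < 0 → lam j < 0 → B i j = 0) ∧
        C = fderiv ℝ g z.1 v + P * B * Pᵀ

/-- The constraint nondegeneracy at `z`:
`g'(x)[ℝᵐ] + {PBPᵀ : B ∈ Sⁿ, B_{ββ} = 0, B_{βγ} = 0, B_{γγ} = 0} = Sⁿ`. -/
def CNondeg (g : Em m → Mat n) (z : Em m × Mat n) : Prop :=
  ∀ P lam, IsEigDecomp (Gmap g z) P lam →
    ∀ C : Mat n, C.IsSymm →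
      ∃ (v : Em m) (B : Mat n), B.IsSymm ∧
        (∀ i j, lam i = 0 → lam j = 0 → B i j = 0) ∧
        (∀ i j, lam i = 0 → lam j < 0 → B i j = 0) ∧
        (∀ i j, lam i < 0 → lam j < 0 → B i j = 0) ∧
        C = fderiv ℝ g z.1 v + P * B * Pᵀ

/-- The strict Robinson constraint qualification (SRCQ) at a KKT pair `z`:
`g'(x)[ℝᵐ] + {PBPᵀ : B ∈ Sⁿ, B_{ββ} ⪰ 0, B_{βγ} = 0, B_{γγ} = 0} = Sⁿ`. -/
def SRCQ (g : Em m → Mat n) (z : Em m × Mat n) : Prop :=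
  ∀ P lam, IsEigDecomp (Gmap g z) P lam →
    ∀ C : Mat n, C.IsSymm →
      ∃ (v : Em m) (B : Mat n), B.IsSymm ∧
        (∀ u : Fin n → ℝ, (∀ i, lam i ≠ 0 → u i = 0) →
          0 ≤ ∑ i, ∑ j, u i * B i j * u j) ∧
        (∀ i j, lam i = 0 → lam j < 0 → B i j = 0) ∧
        (∀ i j, lam i < 0 → lam j < 0 → B i j = 0) ∧
        C = fderiv ℝ g z.1 v + P * B * Pᵀ

/-- The quadratic form
`Q(z,v) = ⟨v, ∇²ₓₓL(x,y)v⟩ + 2·Σ_{i∈α}Σ_{j∈γ} (−λⱼ/λᵢ)·([Pᵀ(g'(x)v)P]_{ij})²`. -/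
def Qform (f : Em m → ℝ) (g : Em m → Mat n) (z : Em m × Mat n)
    (P : Mat n) (lam : Fin n → ℝ) (v : Em m) : ℝ :=
  ⟪v, hessL f g z.1 z.2 v⟫ +
    2 * ∑ i : Fin n, ∑ j : Fin n,
      (if 0 < lam i ∧ lam j < 0 then
        (-lam j / lam i) * ((Pᵀ * fderiv ℝ g z.1 v * P) i j) ^ 2 else 0)

/-- `v ∈ appl(z)`: the blocks `ββ`, `βγ`, `γγ` of `Pᵀ(g'(x)v)P` vanish. -/
def memAppl (g : Em m → Mat n) (z : Em m × Mat n)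
    (P : Mat n) (lam : Fin n → ℝ) (v : Em m) : Prop :=
  (∀ i j, lam i = 0 → lam j = 0 → (Pᵀ * fderiv ℝ g z.1 v * P) i j = 0) ∧
  (∀ i j, lam i = 0 → lam j < 0 → (Pᵀ * fderiv ℝ g z.1 v * P) i j = 0) ∧
  (∀ i j, lam i < 0 → lam j < 0 → (Pᵀ * fderiv ℝ g z.1 v * P) i j = 0)

/-- `v ∈ app(z)`: the blocks `βγ`, `γγ` of `Pᵀ(g'(x)v)P` vanish. -/
def memApp (g : Em m → Mat n) (z : Em m × Mat n)
    (P : Mat n) (lam : Fin n → ℝ) (v : Em m) : Prop :=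
  (∀ i j, lam i = 0 → lam j < 0 → (Pᵀ * fderiv ℝ g z.1 v * P) i j = 0) ∧
  (∀ i j, lam i < 0 → lam j < 0 → (Pᵀ * fderiv ℝ g z.1 v * P) i j = 0)

/-- The weak second order condition (W-SOC) at `z`: `Q(z,v) ≠ 0` for every nonzero
`v ∈ appl(z)`. -/
def WSOC (f : Em m → ℝ) (g : Em m → Mat n) (z : Em m × Mat n) : Prop :=
  ∀ P lam, IsEigDecomp (Gmap g z) P lam →
    ∀ v : Em m, v ≠ 0 → memAppl g z P lam v → Qform f g z P lam v ≠ 0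

/-- The strong second order sufficient condition (S-SOSC) at `z`: `Q(z,v) > 0` for every
nonzero `v ∈ app(z)`. -/
def SSOSC (f : Em m → ℝ) (g : Em m → Mat n) (z : Em m × Mat n) : Prop :=
  ∀ P lam, IsEigDecomp (Gmap g z) P lam →
    ∀ v : Em m, v ≠ 0 → memApp g z P lam v → 0 < Qform f g z P lam v

/-- The second order necessary condition (SONC) at `z`. -/
def SONC (f : Em m → ℝ) (g : Em m → Mat n) (z : Em m × Mat n) : Prop :=
  ∀ P lam, IsEigDecomp (Gmap g z) P lam →
    ∀ v : Em m, v ≠ 0 →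
      (∀ u : Fin n → ℝ, (∀ i, lam i ≠ 0 → u i = 0) →
        0 ≤ ∑ i, ∑ j, u i * (Pᵀ * fderiv ℝ g z.1 v * P) i j * u j) →
      memApp g z P lam v → 0 ≤ Qform f g z P lam v

/-- The W-SOC holds uniformly on a set `S`: there is `c > 0` with `Q(z,v) ≥ c‖v‖²` for
every `z ∈ S` (in `ℝᵐ × Sⁿ`) and every `v ∈ appl(z)`. -/
def UnifWSOC (f : Em m → ℝ) (g : Em m → Mat n) (S : Set (Em m × Mat n)) : Prop :=
  ∃ c : ℝ, 0 < c ∧ ∀ z ∈ S, z.2.IsSymm →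
    ∀ P lam, IsEigDecomp (Gmap g z) P lam →
      ∀ v : Em m, memAppl g z P lam v → c * ‖v‖ ^ 2 ≤ Qform f g z P lam v

/-- `H ∈ T_z`: `H ∈ Sⁿ` with `(PᵀHP)_{ββ} = 0`. -/
def memTz {n : ℕ} (P : Mat n) (lam : Fin n → ℝ) (H : Mat n) : Prop :=
  H.IsSymm ∧ ∀ i j, lam i = 0 → lam j = 0 → (Pᵀ * H * P) i j = 0

/-- `Δ ∈ N_{G(z)}M_{p,q}`: `Δ ∈ Sⁿ` and `(PᵀΔP)_{ij} = 0` whenever `i ∉ β` or `j ∉ β`. -/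
def memNormal {n : ℕ} (P : Mat n) (lam : Fin n → ℝ) (Δ : Mat n) : Prop :=
  Δ.IsSymm ∧ ∀ i j, (lam i ≠ 0 ∨ lam j ≠ 0) → (Pᵀ * Δ * P) i j = 0

/-- The map `ξ_z : T_z → Sⁿ`, `ξ_z(H) = P·M·Pᵀ`. -/
def xiMap {n : ℕ} (P : Mat n) (lam : Fin n → ℝ) (H : Mat n) : Mat n :=
  P * (Matrix.of fun i j =>
    if 0 < lam i ∧ 0 < lam j then (Pᵀ * H * P) i j
    else if 0 < lam i ∧ lam j = 0 then (Pᵀ * H * P) i j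
    else if lam i = 0 ∧ 0 < lam j then (Pᵀ * H * P) i j
    else if 0 < lam i ∧ lam j < 0 then (lam i / (lam i - lam j)) * (Pᵀ * H * P) i j
    else if lam i < 0 ∧ 0 < lam j then (lam j / (lam j - lam i)) * (Pᵀ * H * P) i j
    else 0) * Pᵀ

/-- The linear map `𝒜_z(v,H) = (∇²ₓₓL(x,y)v − ∇g(x)(g'(x)v) + ∇g(x)H, −g'(x)v + ξ_z(H))`. -/
def Amap (f : Em m → ℝ) (g : Em m → Mat n) (z : Em m × Mat n)
    (P : Mat n) (lam : Fin n → ℝ) (v : Em m) (H : Mat n) : Em m × Mat n :=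
  (hessL f g z.1 z.2 v - gradg g z.1 (fderiv ℝ g z.1 v) + gradg g z.1 H,
    - fderiv ℝ g z.1 v + xiMap P lam H)

/-- The positive inertia index of `A` is `p`. -/
def posInertiaIs {n : ℕ} (A : Mat n) (p : ℕ) : Prop :=
  ∃ P lam, IsEigDecomp A P lam ∧ {i : Fin n | 0 < lam i}.ncard = p

/-- The negative inertia index of `A` is `q`. -/
def negInertiaIs {n : ℕ} (A : Mat n) (q : ℕ) : Prop :=
  ∃ P lam, IsEigDecomp A P lam ∧ {i : Fin n | lam i < 0}.ncard = q

end

/-! At `z ∈ M̃_{p',q}` the eigenvalues `λ_{p'+1}, …, λ_p` of `G(z)` vanish. Adding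
`ε • P · Diag(1_{[p',p)}) · Pᵀ` to the multiplier lifts exactly these eigenvalues to `ε` and keeps
the eigenvectors, so for small `ε > 0` the perturbed point lies in `U ∩ M̃_{p,q}` and
`appl(z) ⊆ appl(z_ε)`. The curvature term of `Q` does not change: the entries it gains in the new
positive rows lie in the `βγ` block of `z`, which vanishes on `appl(z)`. As the Hessian of the
Lagrangian is affine in the multiplier, `Q(z_ε, v) = Q(z, v) + ε b`, and letting `ε → 0⁺` in
`c ‖v‖² ≤ Q(z_ε, v)` gives `Q(z, v) ≥ c ‖v‖² > 0`. -/

open Filter Topology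

open Polynomial in
theorem IsEigDecomp.charpoly_eq {n : ℕ} {A P : Mat n} {lam : Fin n → ℝ}
    (h : IsEigDecomp A P lam) : A.charpoly = ∏ i, (X - C (lam i)) := by
  rw [h.2.2, charpoly_mul_comm, ← Matrix.mul_assoc, h.1.2, Matrix.one_mul, charpoly_diagonal]

theorem Antitone.eq_of_map_univ_val_eq {α : Type*} [LinearOrder α] {n : ℕ} {l₁ l₂ : Fin n → α}
    (h₁ : Antitone l₁) (h₂ : Antitone l₂)
    (h : Finset.univ.val.map l₁ = Finset.univ.val.map l₂) : l₁ = l₂ := by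
  rw [Fin.univ_val_map, Fin.univ_val_map, Multiset.coe_eq_coe] at h
  exact List.ofFn_injective (h.eq_of_sortedGE h₁.sortedGE_ofFn h₂.sortedGE_ofFn)

open Polynomial in
theorem IsEigDecomp.eigenvalues_eq {n : ℕ} {A P₁ P₂ : Mat n} {l₁ l₂ : Fin n → ℝ}
    (h₁ : IsEigDecomp A P₁ l₁) (h₂ : IsEigDecomp A P₂ l₂) : l₁ = l₂ := by
  have hroots (l : Fin n → ℝ) : (∏ i, (X - C (l i))).roots = Finset.univ.val.map l := by
    simpa only [Multiset.map_map, Function.comp_def, Finset.prod_eq_multiset_prod] using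
      roots_multiset_prod_X_sub_C (Finset.univ.val.map l)
  refine h₁.2.1.eq_of_map_univ_val_eq h₂.2.1 ?_
  rw [← hroots, ← hroots, ← h₁.charpoly_eq, ← h₂.charpoly_eq]

theorem Antitone.pos_iff_lt_ncard {n : ℕ} {lam : Fin n → ℝ} (h : Antitone lam) (i : Fin n) :
    0 < lam i ↔ i.val < {j | 0 < lam j}.ncard := by
  rw [Set.ncard_eq_toFinset_card', Set.toFinset_ofPred]
  exact (Fin.lt_card_filter_univ_iff_apply_of_imp (fun j => 0 < lam j)
    fun i j hji (hi : 0 < lam i) => hi.trans_le (h hji)).symm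

theorem Antitone.nonneg_iff_lt_ncard {n : ℕ} {lam : Fin n → ℝ} (h : Antitone lam) (i : Fin n) :
    0 ≤ lam i ↔ i.val < n - {j | lam j < 0}.ncard := by
  have hcompl : {j | lam j < 0}ᶜ = {j : Fin n | 0 ≤ lam j} := by ext; simp
  have hcard := Set.ncard_compl {j : Fin n | lam j < 0}
  rw [hcompl, Nat.card_eq_fintype_card, Fintype.card_fin] at hcard
  rw [← hcard, Set.ncard_eq_toFinset_card', Set.toFinset_ofPred]
  exact (Fin.lt_card_filter_univ_iff_apply_of_imp (fun j => 0 ≤ lam j)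
    fun i j hji (hi : 0 ≤ lam i) => hi.trans (h hji)).symm

theorem ncard_setOf_val_lt {n p : ℕ} (h : p ≤ n) : {i : Fin n | i.val < p}.ncard = p := by
  rw [Set.ncard_eq_toFinset_card', Set.toFinset_ofPred, Fin.card_filter_val_lt, min_eq_right h]

theorem isSymm_mul_diagonal_mul_transpose {n : ℕ} (P : Mat n) (d : Fin n → ℝ) :
    (P * diagonal d * Pᵀ).IsSymm := by
  simp [IsSymm, transpose_mul, Matrix.mul_assoc]

theorem IsEigDecomp.add_smul_conj_diagonal {n : ℕ} {A P : Mat n} {lam d : Fin n → ℝ} {t : ℝ}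
    (h : IsEigDecomp A P lam) (hanti : Antitone (lam + t • d)) :
    IsEigDecomp (A + t • (P * diagonal d * Pᵀ)) P (lam + t • d) :=
  ⟨h.1, hanti, by
    rw [h.2.2, ← Matrix.smul_mul, ← Matrix.mul_smul, ← diagonal_smul, ← Matrix.add_mul,
      ← Matrix.mul_add, diagonal_add]
    rfl⟩

def bumpVec (n p' p : ℕ) : Fin n → ℝ := fun i => if p' ≤ i.val ∧ i.val < p then 1 else 0

section Bump

variable {n p' p : ℕ} {lam : Fin n → ℝ} {ε : ℝ}

theorem add_smul_bumpVec_apply (i : Fin n) :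
    (lam + ε • bumpVec n p' p) i = if p' ≤ i.val ∧ i.val < p then lam i + ε else lam i := by
  simp only [Pi.add_apply, Pi.smul_apply, bumpVec, smul_eq_mul]
  split_ifs <;> ring

variable (hpos : ∀ i, 0 < lam i ↔ i.val < p') (hnonneg : ∀ i : Fin n, i.val < p → 0 ≤ lam i)
include hpos hnonneg

theorem eq_zero_of_mem_bump {i : Fin n} (h₁ : p' ≤ i.val) (h₂ : i.val < p) : lam i = 0 :=
  le_antisymm (not_lt.1 fun h => by have := (hpos i).1 h; omega) (hnonneg i h₂)

theorem add_smul_bumpVec_pos_iff (hp' : p' ≤ p) (hε : 0 < ε) (i : Fin n) :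
    0 < (lam + ε • bumpVec n p' p) i ↔ i.val < p := by
  rw [add_smul_bumpVec_apply]
  split_ifs with h
  · simp [eq_zero_of_mem_bump hpos hnonneg h.1 h.2, hε, h.2]
  · rw [hpos]; omega

omit hpos in
theorem add_smul_bumpVec_neg_iff (hε : 0 ≤ ε) (i : Fin n) :
    (lam + ε • bumpVec n p' p) i < 0 ↔ lam i < 0 := by
  rw [add_smul_bumpVec_apply]
  split_ifs with h
  · have := hnonneg i h.2
    constructor <;> intro <;> linarith
  · rfl

omit hpos in
theorem add_smul_bumpVec_apply_of_neg {j : Fin n} (hj : lam j < 0) :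
    (lam + ε • bumpVec n p' p) j = lam j := by
  rw [add_smul_bumpVec_apply, if_neg fun h => (hnonneg j h.2).not_gt hj]

omit hpos in
theorem eq_zero_of_add_smul_bumpVec_eq_zero (hε : 0 < ε) {i : Fin n}
    (h : (lam + ε • bumpVec n p' p) i = 0) : lam i = 0 := by
  rw [add_smul_bumpVec_apply] at h
  split_ifs at h with hi
  · linarith [hnonneg i hi.2]
  · exact h

theorem antitone_add_smul_bumpVec (hanti : Antitone lam) (hε : 0 < ε)
    (hεle : ∀ i, 0 < lam i → ε ≤ lam i) : Antitone (lam + ε • bumpVec n p' p) := by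
  intro i j hij
  have hij' : i.val ≤ j.val := hij
  rw [add_smul_bumpVec_apply, add_smul_bumpVec_apply]
  split_ifs with hj hi hi
  · rw [eq_zero_of_mem_bump hpos hnonneg hi.1 hi.2, eq_zero_of_mem_bump hpos hnonneg hj.1 hj.2]
  · have hi' : 0 < lam i := (hpos i).2 (by omega)
    linarith [hεle i hi', eq_zero_of_mem_bump hpos hnonneg hj.1 hj.2]
  · have hj' : ¬ 0 < lam j := by rw [hpos]; omega
    linarith [eq_zero_of_mem_bump hpos hnonneg hi.1 hi.2]
  · exact hanti hij

theorem sum_add_smul_bumpVec_eq (hε : 0 < ε) (M : Mat n)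
    (hM : ∀ i j, lam i = 0 → lam j < 0 → M i j = 0) :
    (∑ i, ∑ j, if 0 < (lam + ε • bumpVec n p' p) i ∧ (lam + ε • bumpVec n p' p) j < 0 then
        -(lam + ε • bumpVec n p' p) j / (lam + ε • bumpVec n p' p) i * M i j ^ 2 else 0) =
      ∑ i, ∑ j, if 0 < lam i ∧ lam j < 0 then -lam j / lam i * M i j ^ 2 else 0 := by
  refine Finset.sum_congr rfl fun i _ => Finset.sum_congr rfl fun j _ => ?_
  by_cases hj : lam j < 0
  · rw [add_smul_bumpVec_apply_of_neg hnonneg hj]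
    by_cases hi : p' ≤ i.val ∧ i.val < p
    · simp [hM i j (eq_zero_of_mem_bump hpos hnonneg hi.1 hi.2) hj]
    · rw [add_smul_bumpVec_apply, if_neg hi]
  · rw [if_neg fun h => hj ((add_smul_bumpVec_neg_iff hnonneg hε.le j).1 h.2),
      if_neg fun h => hj h.2]

end Bump

section Gradient

variable {E : Type*} [NormedAddCommGroup E] [InnerProductSpace ℝ E] [CompleteSpace E]

theorem ContDiff.differentiable_gradient {φ : E → ℝ} (hφ : ContDiff ℝ 2 φ) :
    Differentiable ℝ (gradient φ) :=
  ((InnerProductSpace.toDual ℝ E).symm.toContinuousLinearEquiv.contDiff.comp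
    (hφ.fderiv_right (by norm_num))).differentiable one_ne_zero

theorem gradient_add_const_mul {φ ψ : E → ℝ} (hφ : Differentiable ℝ φ)
    (hψ : Differentiable ℝ ψ) (t : ℝ) :
    gradient (fun w => φ w + t * ψ w) = gradient φ + t • gradient ψ := by
  ext1 u
  simp only [gradient, Pi.add_apply, Pi.smul_apply]
  rw [fderiv_fun_add (hφ u) ((hψ u).const_mul t), fderiv_const_mul (hψ u), map_add, map_smul]

theorem fderiv_gradient_add_const_mul {φ ψ : E → ℝ} (hφ : ContDiff ℝ 2 φ)
    (hψ : ContDiff ℝ 2 ψ) (t : ℝ) (x : E) :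
    fderiv ℝ (gradient fun w => φ w + t * ψ w) x =
      fderiv ℝ (gradient φ) x + t • fderiv ℝ (gradient ψ) x := by
  rw [gradient_add_const_mul (hφ.differentiable (by norm_num)) (hψ.differentiable (by norm_num)),
    fderiv_add (hφ.differentiable_gradient x) ((hψ.differentiable_gradient x).const_smul t),
    fderiv_const_smul (hψ.differentiable_gradient x)]

end Gradient

theorem hessL_add_smul {m n : ℕ} {f : Em m → ℝ} {g : Em m → Mat n} (hf : ContDiff ℝ 2 f)
    (hg : ContDiff ℝ 2 g) (x : Em m) (y D : Mat n) (t : ℝ) :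
    hessL f g x (y + t • D) =
      hessL f g x y + t • fderiv ℝ (gradient fun w => minner D (g w)) x := by
  have hminner (B : Mat n) : ContDiff ℝ 2 fun w => minner B (g w) :=
    (LinearMap.toContinuousLinearMap
      (Matrix.traceLinearMap (Fin n) ℝ ℝ ∘ₗ LinearMap.mulLeft ℝ Bᵀ)).contDiff.comp hg
  have hL : (fun w => Lfun f g w (y + t • D)) = fun w => Lfun f g w y + t * minner D (g w) := by
    ext w
    simp only [Lfun, minner, transpose_add, transpose_smul, Matrix.add_mul, Matrix.smul_mul,
      trace_add, trace_smul, smul_eq_mul]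
    ring
  rw [hessL, hL]
  exact fderiv_gradient_add_const_mul (hf.add (hminner y)) (hminner D) t x

theorem memAppl.of_eigenvalues {m n : ℕ} {g : Em m → Mat n} {z : Em m × Mat n} {y : Mat n}
    {P : Mat n} {lam lam' : Fin n → ℝ} {v : Em m} (h : memAppl g z P lam v)
    (hzero : ∀ i, lam' i = 0 → lam i = 0) (hneg : ∀ i, lam' i < 0 → lam i < 0) :
    memAppl g (z.1, y) P lam' v :=
  ⟨fun i j hi hj => h.1 i j (hzero i hi) (hzero j hj),
    fun i j hi hj => h.2.1 i j (hzero i hi) (hneg j hj),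
    fun i j hi hj => h.2.2 i j (hneg i hi) (hneg j hj)⟩

section Perturbation

variable {m n p' p : ℕ} {f : Em m → ℝ} {g : Em m → Mat n} {z : Em m × Mat n} {P : Mat n}
  {lam : Fin n → ℝ} {ε : ℝ}
  (hpos : ∀ i, 0 < lam i ↔ i.val < p') (hnonneg : ∀ i : Fin n, i.val < p → 0 ≤ lam i)
include hpos hnonneg

theorem isEigDecomp_add_smul_bumpVec (hdec : IsEigDecomp (Gmap g z) P lam) (hε : 0 < ε)
    (hεle : ∀ i, 0 < lam i → ε ≤ lam i) :
    IsEigDecomp (Gmap g (z.1, z.2 + ε • (P * diagonal (bumpVec n p' p) * Pᵀ))) P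
      (lam + ε • bumpVec n p' p) := by
  simpa only [Gmap, add_assoc] using
    hdec.add_smul_conj_diagonal (antitone_add_smul_bumpVec hpos hnonneg hdec.2.1 hε hεle)

theorem Qform_add_smul_bumpVec (hf : ContDiff ℝ 2 f) (hg : ContDiff ℝ 2 g) (hε : 0 < ε)
    {v : Em m} (happl : memAppl g z P lam v) :
    Qform f g (z.1, z.2 + ε • (P * diagonal (bumpVec n p' p) * Pᵀ)) P (lam + ε • bumpVec n p' p) v
      = Qform f g z P lam v + ε * ⟪v, fderiv ℝ
          (gradient fun w => minner (P * diagonal (bumpVec n p' p) * Pᵀ) (g w)) z.1 v⟫ := by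
  rw [Qform, Qform, hessL_add_smul hf hg, sum_add_smul_bumpVec_eq hpos hnonneg hε _ happl.2.1,
    _root_.add_apply, _root_.smul_apply, inner_add_right, real_inner_smul_right]
  ring

theorem mem_lstratum_add_smul_bumpVec {q : ℕ} (hzsymm : z.2.IsSymm)
    (hdec : IsEigDecomp (Gmap g z) P lam) (hneg : {i | lam i < 0}.ncard = q) (hp' : p' ≤ p)
    (hpn : p ≤ n) (hε : 0 < ε) (hεle : ∀ i, 0 < lam i → ε ≤ lam i) :
    (z.1, z.2 + ε • (P * diagonal (bumpVec n p' p) * Pᵀ)) ∈ lstratum g p q := by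
  refine ⟨hzsymm.add ((isSymm_mul_diagonal_mul_transpose P _).smul ε), P, _,
    isEigDecomp_add_smul_bumpVec hpos hnonneg hdec hε hεle, ?_, ?_⟩
  · simp only [add_smul_bumpVec_pos_iff hpos hnonneg hp' hε, ncard_setOf_val_lt hpn]
  · simp only [add_smul_bumpVec_neg_iff hnonneg hε.le, hneg]

omit hpos in
theorem memAppl_add_smul_bumpVec (hε : 0 < ε) {y : Mat n} {v : Em m}
    (happl : memAppl g z P lam v) : memAppl g (z.1, y) P (lam + ε • bumpVec n p' p) v :=
  happl.of_eigenvalues (fun _ => eq_zero_of_add_smul_bumpVec_eq_zero hnonneg hε)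
    (fun i => (add_smul_bumpVec_neg_iff hnonneg hε.le i).1)

end Perturbation

theorem le_of_eventually_le_add_mul {x a b : ℝ} (h : ∀ᶠ ε in 𝓝[>] 0, x ≤ a + ε * b) :
    x ≤ a :=
  ge_of_tendsto (((continuous_const.add (continuous_id.mul continuous_const)).tendsto' 0 a
    (by simp)).mono_left nhdsWithin_le_nhds) h

theorem eventually_forall_le_of_pos {ι : Type*} [Finite ι] (lam : ι → ℝ) :
    ∀ᶠ ε in 𝓝[>] 0, ∀ i, 0 < lam i → ε ≤ lam i := by
  refine eventually_all.2 fun i => ?_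
  by_cases hi : 0 < lam i
  · filter_upwards [Ioo_mem_nhdsGT hi] with ε hε using fun _ => hε.2.le
  · exact Eventually.of_forall fun _ h => absurd h hi

theorem WSOC_closed_across_strata_general {m n p q : ℕ}
    (f : Em m → ℝ) (g : Em m → Mat n)
    (hf : ContDiff ℝ 2 f) (hg : ContDiff ℝ 2 g)
    (hpq : p + q ≤ n)
    (U : Set (Em m × Mat n)) (hU : IsOpen U)
    (h : UnifWSOC f g (U ∩ lstratum g p q)) :
    ∀ p' : ℕ, p' ≤ p → ∀ z ∈ U ∩ lstratum g p' q, WSOC f g z := by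
  rintro p' hp' z ⟨hzU, hzsymm, P₀, lam₀, hdec₀, hpos₀, hneg₀⟩ P lam hdec v hv happl
  obtain rfl := hdec.eigenvalues_eq hdec₀
  obtain ⟨c, hc, hunif⟩ := h
  have hpos (i : Fin n) : 0 < lam i ↔ i.val < p' := hpos₀ ▸ Antitone.pos_iff_lt_ncard hdec.2.1 i
  have hnonneg (i : Fin n) (hi : i.val < p) : 0 ≤ lam i :=
    (Antitone.nonneg_iff_lt_ncard hdec.2.1 i).2 (by omega)
  set D := P * diagonal (bumpVec n p' p) * Pᵀ
  have hU' : ∀ᶠ ε in 𝓝[>] (0 : ℝ), (z.1, z.2 + ε • D) ∈ U :=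
    nhdsWithin_le_nhds <| ((continuous_const.prodMk (continuous_const.add
      (continuous_id.smul continuous_const))).tendsto' 0 z (by simp)).eventually (hU.mem_nhds hzU)
  suffices hlim : ∀ᶠ ε in 𝓝[>] (0 : ℝ), c * ‖v‖ ^ 2 ≤
      Qform f g z P lam v + ε * ⟪v, fderiv ℝ (gradient fun w => minner D (g w)) z.1 v⟫ from
    ((mul_pos hc (by positivity)).trans_le (le_of_eventually_le_add_mul hlim)).ne'
  filter_upwards [hU', self_mem_nhdsWithin, eventually_forall_le_of_pos lam]
    with ε hεU (hε : 0 < ε) hεle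
  have hmem := mem_lstratum_add_smul_bumpVec hpos hnonneg hzsymm hdec hneg₀ hp' (by omega) hε hεle
  rw [← Qform_add_smul_bumpVec hpos hnonneg hf hg hε happl]
  exact hunif _ ⟨hεU, hmem⟩ hmem.1 P _ (isEigDecomp_add_smul_bumpVec hpos hnonneg hdec hε hεle) v
    (memAppl_add_smul_bumpVec hnonneg hε happl)

/-- Closedness of the uniform W-SOC across strata: if the W-SOC holds
uniformly on `U ∩ M̃_{p,q}` for an open `U`, then the W-SOC holds at every
`z ∈ U ∩ M̃_{p',q}` for every `0 ≤ p' ≤ p`. -/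
theorem WSOC_closed_across_strata {m n p q : ℕ}
    (f : Em m → ℝ) (g : Em m → Mat n)
    (hf : ContDiff ℝ 2 f) (hg : ContDiff ℝ 2 g) (hgs : ∀ x, (g x).IsSymm)
    (hpq : p + q ≤ n)
    (U : Set (Em m × Mat n)) (hU : IsOpen U)
    (h : UnifWSOC f g (U ∩ lstratum g p q)) :
    ∀ p' : ℕ, p' ≤ p → ∀ z ∈ U ∩ lstratum g p' q, WSOC f g z :=
  WSOC_closed_across_strata_general f g hf hg hpq U hU h
end

section
/- Let z̄ = (x̄,ȳ) be a KKT pair (F(z̄) = 0), let p, q be the positive and negative inertia indices of G(z̄) (so z̄ ∈ M̃_{p,q}), and assume the W-SOC and the SRCQ hold at z̄. Define J(Δ) := (∇g(x̄)Δ, Π_+(Δ)) ∈ ℝ^m × S^n for Δ ∈ N_{G(z̄)}M_{p,q}. Then J is positively homogeneous (J(tΔ) = t·J(Δ) for all t ≥ 0), and there exist constants 0 < c₁ < c₂ such that c₁‖Δ‖ ≤ ‖J(Δ)‖ ≤ c₂‖Δ‖ for all Δ ∈ N_{G(z̄)}M_{p,q}. -/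
open scoped Classical RealInnerProductSpace
open Matrix Set

/-!
`Π₊` acts on eigenvalues, so it is positively homogeneous, and `J` is bounded above because
`∇g(x̄)` is linear and `‖Π₊Δ‖ ≤ ‖Δ‖`. For the lower bound write `Δ = Π₊Δ - Δ₋`, where
`Δ₋ = Π₊Δ - Δ` is positive semidefinite and again lies in the normal space. The SRCQ makes
`∇g(x̄)` injective on the closed cone `N ∩ Sⁿ₊`: decomposing `-Ψ = g'(x̄)v + PBPᵀ` and pairing
with `Ψ` gives `-‖Ψ‖² = ⟨PᵀΨP, B⟩ ≥ 0` whenever `∇g(x̄)Ψ = 0`. Compactness of the unit sphere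
then yields `‖∇g(x̄)Ψ‖ ≥ c‖Ψ‖` on that cone, so `‖Δ₋‖`, and with it `‖Δ‖`, is controlled by
`‖Π₊Δ‖ + ‖∇g(x̄)Δ‖`.
-/

section Frobenius

variable {ι κ : Type*} [Fintype ι] [Fintype κ]

theorem Matrix.frobenius_norm_le_of_forall_abs_le {A B : Matrix ι κ ℝ}
    (h : ∀ i j, |A i j| ≤ |B i j|) : ‖A‖ ≤ ‖B‖ := by
  simp only [frobenius_norm_def, Real.norm_eq_abs]
  gcongr (∑ i, ∑ j, ?_ ^ (2 : ℝ)) ^ _ with i _ j _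
  exact h i j

theorem Matrix.frobenius_norm_sq_eq_trace (A : Matrix ι κ ℝ) : ‖A‖ ^ 2 = (Aᵀ * A).trace := by
  rw [frobenius_norm_def, ← Real.rpow_natCast, ← Real.rpow_mul (by positivity)]
  norm_num [trace, mul_apply, Finset.sum_comm (γ := ι), sq]

end Frobenius

open scoped MatrixOrder in
theorem Matrix.PosSemidef.trace_mul_nonneg_of_diag_eq_zero {ι : Type*} [Fintype ι]
    {S B : Matrix ι ι ℝ} (s : Set ι) (hS : S.PosSemidef)
    (hSs : ∀ i ∉ s, S i i = 0)
    (hB : ∀ u : ι → ℝ, (∀ i ∉ s, u i = 0) → 0 ≤ ∑ i, ∑ j, u i * B i j * u j) :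
    0 ≤ (S * B).trace := by
  obtain ⟨R, rfl⟩ := CStarAlgebra.nonneg_iff_eq_star_mul_self.mp hS.nonneg
  simp only [star_eq_conjTranspose, conjTranspose_eq_transpose_of_trivial] at hSs ⊢
  -- a zero diagonal entry of `Rᵀ R` forces the corresponding column of `R` to vanish
  have hR : ∀ k, ∀ i ∉ s, R k i = 0 := by
    intro k i hi
    have hsum : ∑ l, R l i * R l i = 0 := by simpa [mul_apply] using hSs i hi
    exact mul_self_eq_zero.1 <|
      (Finset.sum_eq_zero_iff_of_nonneg fun l _ => mul_self_nonneg _).1 hsum k (by simp)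
  rw [← trace_mul_cycle]
  refine Finset.sum_nonneg fun k _ => ?_
  have hdiag : (R * B * Rᵀ).diag k = ∑ i, ∑ j, R k i * B i j * R k j := by
    simp only [diag, mul_apply, transpose_apply, Finset.sum_mul]
    exact Finset.sum_comm
  exact hdiag ▸ hB (R k) (hR k)

theorem Matrix.isClosed_setOf_posSemidef {ι : Type*} [Fintype ι] :
    IsClosed {A : Matrix ι ι ℝ | A.PosSemidef} := by
  simp only [posSemidef_iff_dotProduct_mulVec, Set.ofPred_and, Set.ofPred_forall]
  exact (isClosed_eq continuous_id.matrix_conjTranspose continuous_id).inter <|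
    isClosed_iInter fun x => isClosed_le continuous_const <|
      continuous_const.dotProduct (continuous_id.matrix_mulVec continuous_const)

theorem ContinuousLinearMap.exists_pos_mul_norm_le_of_isClosed_cone {E F : Type*}
    [NormedAddCommGroup E] [NormedSpace ℝ E] [FiniteDimensional ℝ E]
    [NormedAddCommGroup F] [NormedSpace ℝ F] (T : E →L[ℝ] F) {K : Set E}
    (hK : IsClosed K) (hsmul : ∀ x ∈ K, ∀ t : ℝ, 0 < t → t • x ∈ K)
    (hT : ∀ x ∈ K, T x = 0 → x = 0) :
    ∃ c > 0, ∀ x ∈ K, c * ‖x‖ ≤ ‖T x‖ := by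
  have hunit : ∀ x ∈ K, x ≠ 0 → ‖x‖⁻¹ • x ∈ Metric.sphere (0 : E) 1 ∩ K := fun x hx hx0 =>
    ⟨by simp [norm_smul, hx0], hsmul x hx _ (by positivity)⟩
  rcases (Metric.sphere (0 : E) 1 ∩ K).eq_empty_or_nonempty with hempty | hne
  · refine ⟨1, one_pos, fun x hx => ?_⟩
    obtain rfl : x = 0 := by
      by_contra hx0
      simpa [hempty] using hunit x hx hx0
    simp
  · obtain ⟨x₀, ⟨hx₀, hx₀K⟩, hmin⟩ := ((isCompact_sphere 0 1).inter_right hK).exists_isMinOn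
      hne T.continuous.norm.continuousOn
    refine ⟨‖T x₀‖, norm_pos_iff.2 fun h => ?_, fun x hx => ?_⟩
    · simp [hT x₀ hx₀K h] at hx₀
    · rcases eq_or_ne x 0 with rfl | hx0
      · simp
      have : ‖T x₀‖ ≤ ‖T (‖x‖⁻¹ • x)‖ := hmin (hunit x hx hx0)
      rw [map_smul, norm_smul, norm_inv, norm_norm] at this
      rwa [le_inv_mul_iff₀ (norm_pos_iff.2 hx0), mul_comm] at this

section Spectral

open scoped MatrixOrder

variable {n : ℕ}

theorem norm_conj_of_transpose_mul_self_eq_one {Q : Mat n} (hQ : Qᵀ * Q = 1) (M : Mat n) :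
    ‖Q * M * Qᵀ‖ = ‖M‖ := by
  have hsq : ‖Q * M * Qᵀ‖ ^ 2 = ‖M‖ ^ 2 := by
    rw [frobenius_norm_sq_eq_trace, frobenius_norm_sq_eq_trace]
    simp only [transpose_mul, transpose_transpose, Matrix.mul_assoc]
    rw [← Matrix.mul_assoc Qᵀ Q, hQ, Matrix.one_mul, trace_mul_comm, Matrix.mul_assoc,
      Matrix.mul_assoc, hQ, Matrix.mul_one]
  exact (pow_left_inj₀ (norm_nonneg _) (norm_nonneg _) two_ne_zero).1 hsq

theorem exists_isEigDecomp {A : Mat n} (hA : A.IsSymm) : ∃ P lam, IsEigDecomp A P lam := by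
  have hH : A.IsHermitian := by
    rwa [IsHermitian, conjTranspose_eq_transpose_of_trivial]
  set U : Mat n := (hH.eigenvectorUnitary : Mat n)
  have hU : U * Uᵀ = 1 ∧ Uᵀ * U = 1 := by
    have h := hH.eigenvectorUnitary.2
    exact ⟨(mem_orthogonalGroup_iff _ ℝ).1 h, (mem_orthogonalGroup_iff' _ ℝ).1 h⟩
  have hAU : A = U * diagonal hH.eigenvalues * Uᵀ := by
    conv_lhs => rw [hH.spectral_theorem]
    simp [U, star_eq_conjTranspose]
  set σ := Tuple.sort (fun i => -hH.eigenvalues i)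
  refine ⟨U.submatrix id σ, hH.eigenvalues ∘ σ, ⟨?_, ?_⟩, fun i j hij => ?_, ?_⟩
  · rw [transpose_submatrix, submatrix_mul_equiv, hU.1, submatrix_id_id]
  · rw [transpose_submatrix, ← submatrix_mul _ _ _ _ _ Function.bijective_id, hU.2,
      submatrix_one_equiv]
  · simpa using Tuple.monotone_sort (fun i => -hH.eigenvalues i) hij
  · rw [transpose_submatrix, ← submatrix_diagonal_equiv, submatrix_mul_equiv,
      submatrix_mul_equiv, ← hAU, submatrix_id_id]

theorem IsEigDecomp.isSymm {A P : Mat n} {lam : Fin n → ℝ} (h : IsEigDecomp A P lam) :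
    A.IsSymm := by
  rw [IsSymm, h.2.2]
  simp [Matrix.mul_assoc]

theorem conj_diagonal_mul_conj_diagonal {Q : Mat n} (hQ : Qᵀ * Q = 1) (a b : Fin n → ℝ) :
    Q * diagonal a * Qᵀ * (Q * diagonal b * Qᵀ) = Q * diagonal (a * b) * Qᵀ := by
  simp only [Matrix.mul_assoc]
  rw [← Matrix.mul_assoc Qᵀ Q, hQ, Matrix.one_mul, ← Matrix.mul_assoc (diagonal a),
    diagonal_mul_diagonal]
  rfl

theorem posSemidef_conj_diagonal (Q : Mat n) {d : Fin n → ℝ} (hd : 0 ≤ d) :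
    (Q * diagonal d * Qᵀ).PosSemidef := by
  simpa [conjTranspose_eq_transpose_of_trivial] using
    (PosSemidef.diagonal hd).mul_mul_conjTranspose_same Q

theorem IsEigDecomp.conj_diagonal_abs_eq_sqrt {A P : Mat n} {lam : Fin n → ℝ}
    (h : IsEigDecomp A P lam) :
    P * diagonal (fun i => |lam i|) * Pᵀ = CFC.sqrt (A * A) := by
  refine (CFC.sqrt_unique ?_ (posSemidef_conj_diagonal P fun i => abs_nonneg _).nonneg).symm
  rw [conj_diagonal_mul_conj_diagonal h.1.2, h.2.2, conj_diagonal_mul_conj_diagonal h.1.2]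
  congr 3
  funext i
  exact abs_mul_abs_self (lam i)

theorem IsEigDecomp.piPlus_eq {A P : Mat n} {lam : Fin n → ℝ} (h : IsEigDecomp A P lam) :
    piPlus A = P * diagonal (fun i => max (lam i) 0) * Pᵀ := by
  -- `max λ 0 = (λ + |λ|) / 2`, and `P |Λ| Pᵀ = √(A²)` does not depend on the decomposition
  have key : ∀ {Q mu}, IsEigDecomp A Q mu →
      Q * diagonal (fun i => max (mu i) 0) * Qᵀ = (2⁻¹ : ℝ) • (A + CFC.sqrt (A * A)) := by
    intro Q mu hQ
    have hmax : (fun i => max (mu i) 0) = (2⁻¹ : ℝ) • fun i => mu i + |mu i| := by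
      ext i
      rcases le_total (mu i) 0 with hi | hi
      · simp [max_eq_right hi, abs_of_nonpos hi]
      · simp [max_eq_left hi, abs_of_nonneg hi]; ring
    rw [← hQ.conj_diagonal_abs_eq_sqrt, hQ.2.2, hmax, diagonal_smul, ← diagonal_add]
    simp only [Matrix.mul_smul, Matrix.smul_mul, Matrix.mul_add, Matrix.add_mul]
  have hex : ∃ P lam, IsEigDecomp A P lam := ⟨P, lam, h⟩
  rw [piPlus, dif_pos hex, key hex.choose_spec.choose_spec, key h]

theorem IsEigDecomp.smul {A P : Mat n} {lam : Fin n → ℝ} (h : IsEigDecomp A P lam) {t : ℝ}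
    (ht : 0 ≤ t) : IsEigDecomp (t • A) P (t • lam) :=
  ⟨h.1, h.2.1.const_mul ht, by rw [h.2.2, diagonal_smul, Matrix.mul_smul, Matrix.smul_mul]⟩

theorem piPlus_smul {A : Mat n} (hA : A.IsSymm) {t : ℝ} (ht : 0 ≤ t) :
    piPlus (t • A) = t • piPlus A := by
  obtain ⟨P, lam, h⟩ := exists_isEigDecomp hA
  rw [(h.smul ht).piPlus_eq, h.piPlus_eq, ← Matrix.smul_mul, ← Matrix.mul_smul, ← diagonal_smul]
  congr 3
  funext i
  simp [mul_max_of_nonneg _ _ ht]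

end Spectral

section NormalSpace

variable {n : ℕ}

theorem conj_apply_eq_mulVec_col (P Δ : Mat n) (i j : Fin n) :
    (Pᵀ * Δ * P) i j = (Pᵀ *ᵥ (Δ *ᵥ fun k => P k j)) i := by
  rw [mulVec_mulVec]
  rfl

theorem memNormal_iff_mulVec_col {P Δ : Mat n} {lam : Fin n → ℝ} (hP : P * Pᵀ = 1)
    (hΔ : Δ.IsSymm) :
    memNormal P lam Δ ↔ ∀ j, lam j ≠ 0 → (Δ *ᵥ fun k => P k j) = 0 := by
  refine ⟨fun h j hj => ?_, fun h => ⟨hΔ, fun i j hij => ?_⟩⟩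
  · have hcoord : (Pᵀ *ᵥ (Δ *ᵥ fun k => P k j)) = 0 := by
      ext i
      rw [← conj_apply_eq_mulVec_col, h.2 i j (Or.inr hj), Pi.zero_apply]
    rw [← Matrix.one_mulVec (Δ *ᵥ _), ← hP, ← mulVec_mulVec, hcoord, mulVec_zero]
  · have hsymm : (Pᵀ * Δ * P) i j = (Pᵀ * Δ * P) j i := by
      rw [← transpose_apply (Pᵀ * Δ * P) i j, transpose_mul, transpose_mul, transpose_transpose,
        hΔ.eq, Matrix.mul_assoc]
    rcases hij with hi | hj
    · rw [hsymm, conj_apply_eq_mulVec_col, h i hi, mulVec_zero, Pi.zero_apply]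
    · rw [conj_apply_eq_mulVec_col, h j hj, mulVec_zero, Pi.zero_apply]

theorem IsEigDecomp.mulVec_conj_diagonal_eq_zero {A Q : Mat n} {mu : Fin n → ℝ}
    (h : IsEigDecomp A Q mu) {f : ℝ → ℝ} (hf : f 0 = 0) {v : Fin n → ℝ} (hv : A *ᵥ v = 0) :
    (Q * diagonal (fun i => f (mu i)) * Qᵀ) *ᵥ v = 0 := by
  have hw : diagonal mu *ᵥ (Qᵀ *ᵥ v) = 0 := calc
    _ = Qᵀ *ᵥ (A *ᵥ v) := by
      rw [h.2.2, mulVec_mulVec, mulVec_mulVec, ← Matrix.mul_assoc, ← Matrix.mul_assoc, h.1.2,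
        Matrix.one_mul]
    _ = 0 := by rw [hv, mulVec_zero]
  have hfw : diagonal (fun i => f (mu i)) *ᵥ (Qᵀ *ᵥ v) = 0 := by
    ext k
    have hk := congrFun hw k
    rw [mulVec_diagonal] at hk ⊢
    rcases mul_eq_zero.1 hk with hk | hk <;> simp [hk, hf]
  rw [← mulVec_mulVec, ← mulVec_mulVec, hfw, mulVec_zero]

theorem memNormal_and_posSemidef_piPlus_sub_self {P Δ : Mat n} {lam : Fin n → ℝ}
    (hP : IsOrthoMat P) (hΔ : memNormal P lam Δ) :
    memNormal P lam (piPlus Δ - Δ) ∧ (piPlus Δ - Δ).PosSemidef := by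
  obtain ⟨Q, mu, hQ⟩ := exists_isEigDecomp hΔ.1
  have heq : piPlus Δ - Δ = Q * diagonal (fun i => max (mu i) 0 - mu i) * Qᵀ := by
    rw [hQ.piPlus_eq, hQ.2.2, ← Matrix.sub_mul, ← Matrix.mul_sub, diagonal_sub]
  have hpsd : (piPlus Δ - Δ).PosSemidef :=
    heq ▸ posSemidef_conj_diagonal Q fun i => sub_nonneg.2 (le_max_left _ _)
  have hsymm : (piPlus Δ - Δ).IsSymm := by
    rw [IsSymm, ← conjTranspose_eq_transpose_of_trivial]
    exact hpsd.isHermitian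
  refine ⟨(memNormal_iff_mulVec_col hP.1 hsymm).2 fun j hj => ?_, hpsd⟩
  rw [heq]
  exact hQ.mulVec_conj_diagonal_eq_zero (f := fun a => max a 0 - a) (by simp)
    ((memNormal_iff_mulVec_col hP.1 hΔ.1).1 hΔ j hj)

theorem norm_piPlus_le {A : Mat n} (hA : A.IsSymm) : ‖piPlus A‖ ≤ ‖A‖ := by
  obtain ⟨P, lam, h⟩ := exists_isEigDecomp hA
  rw [h.piPlus_eq, h.2.2, norm_conj_of_transpose_mul_self_eq_one h.1.2,
    norm_conj_of_transpose_mul_self_eq_one h.1.2]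
  refine frobenius_norm_le_of_forall_abs_le fun i j => ?_
  rcases eq_or_ne i j with rfl | hij
  · rcases le_total (lam i) 0 with hi | hi <;> simp [hi]
  · simp [diagonal_apply_ne _ hij]

theorem memNormal.smul {P Δ : Mat n} {lam : Fin n → ℝ} (h : memNormal P lam Δ) (t : ℝ) :
    memNormal P lam (t • Δ) :=
  ⟨h.1.smul t, fun i j hij => by
    rw [Matrix.mul_smul, Matrix.smul_mul, Matrix.smul_apply, h.2 i j hij, smul_zero]⟩

theorem isClosed_setOf_memNormal_posSemidef (P : Mat n) (lam : Fin n → ℝ) :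
    IsClosed {Ψ : Mat n | memNormal P lam Ψ ∧ Ψ.PosSemidef} := by
  simp only [memNormal, Set.ofPred_and, Set.ofPred_forall]
  refine ((isClosed_eq continuous_id.matrix_transpose continuous_id).inter <|
    isClosed_iInter fun i => isClosed_iInter fun j => isClosed_iInter fun _ => ?_).inter
    isClosed_setOf_posSemidef
  exact isClosed_eq (((continuous_const.matrix_mul continuous_id).matrix_mul
    continuous_const).matrix_elem i j) continuous_const

end NormalSpace

section Gradient

variable {m n : ℕ}

noncomputable def gradgCLM (g : Em m → Mat n) (x : Em m) : Mat n →L[ℝ] Em m :=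
  LinearMap.toContinuousLinearMap
    { toFun := gradg g x
      map_add' H₁ H₂ := by ext k; simp [gradg, Matrix.add_mul]
      map_smul' c H := by ext k; simp [gradg] }

theorem exists_norm_gradg_le (g : Em m → Mat n) (x : Em m) :
    ∃ C > 0, ∀ H, ‖gradg g x H‖ ≤ C * ‖H‖ :=
  (gradgCLM g x).bound

theorem gradg_smul (g : Em m → Mat n) (x : Em m) (t : ℝ) (H : Mat n) :
    gradg g x (t • H) = t • gradg g x H :=
  map_smul (gradgCLM g x) t H

theorem gradg_sub (g : Em m → Mat n) (x : Em m) (H K : Mat n) :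
    gradg g x (H - K) = gradg g x H - gradg g x K :=
  map_sub (gradgCLM g x) H K

theorem inner_gradg (g : Em m → Mat n) (x : Em m) (H : Mat n) (v : Em m) :
    ⟪gradg g x H, v⟫ = (Hᵀ * fderiv ℝ g x v).trace := by
  conv_rhs => rw [← (EuclideanSpace.basisFun (Fin m) ℝ).sum_repr v]
  simp [gradg, PiLp.inner_apply, Matrix.mul_sum, Matrix.trace_sum]

end Gradient

section SRCQ

variable {m n : ℕ}

theorem SRCQ.eq_zero_of_gradg_eq_zero {g : Em m → Mat n} {z : Em m × Mat n} (hS : SRCQ g z)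
    {P : Mat n} {lam : Fin n → ℝ} (hdec : IsEigDecomp (Gmap g z) P lam) {Ψ : Mat n}
    (hΨ : memNormal P lam Ψ) (hpsd : Ψ.PosSemidef) (h0 : gradg g z.1 Ψ = 0) : Ψ = 0 := by
  obtain ⟨v, B, -, hB, -, -, hC⟩ :=
    hS P lam hdec (-Ψ) (by rw [IsSymm, transpose_neg, hΨ.1.eq])
  have hv : (Ψᵀ * fderiv ℝ g z.1 v).trace = 0 := by
    rw [← inner_gradg, h0, inner_zero_left]
  have hPBP : 0 ≤ (Ψᵀ * (P * B * Pᵀ)).trace := by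
    have hcycle : (Ψᵀ * (P * B * Pᵀ)).trace = (Pᵀ * Ψ * P * B).trace := by
      rw [hΨ.1.eq, trace_mul_comm, ← trace_mul_cycle]
      simp only [Matrix.mul_assoc]
    have hconj : (Pᵀ * Ψ * P).PosSemidef := by
      simpa [conjTranspose_eq_transpose_of_trivial] using hpsd.conjTranspose_mul_mul_same P
    exact hcycle ▸ hconj.trace_mul_nonneg_of_diag_eq_zero {i | lam i = 0}
      (fun i hi => hΨ.2 i i (Or.inl hi)) hB
  have hnorm : ‖Ψ‖ ^ 2 ≤ 0 := by
    have : (Ψᵀ * -Ψ).trace = (Ψᵀ * fderiv ℝ g z.1 v).trace + (Ψᵀ * (P * B * Pᵀ)).trace := by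
      rw [hC, Matrix.mul_add, trace_add]
    rw [Matrix.mul_neg, trace_neg, ← frobenius_norm_sq_eq_trace, hv] at this
    linarith
  exact norm_eq_zero.1 (pow_eq_zero_iff two_ne_zero |>.1 (le_antisymm hnorm (sq_nonneg _)))

end SRCQ

section Bounds

variable {m n : ℕ}

theorem norm_fst_le_pnorm (w : Em m × Mat n) : ‖w.1‖ ≤ pnorm w :=
  Real.le_sqrt_of_sq_le (le_add_of_nonneg_right (sq_nonneg _))

theorem norm_snd_le_pnorm (w : Em m × Mat n) : ‖w.2‖ ≤ pnorm w :=
  Real.le_sqrt_of_sq_le (le_add_of_nonneg_left (sq_nonneg _))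

theorem pnorm_le_add (w : Em m × Mat n) : pnorm w ≤ ‖w.1‖ + ‖w.2‖ :=
  Real.sqrt_le_iff.2 ⟨by positivity, by nlinarith [norm_nonneg w.1, norm_nonneg w.2]⟩

theorem SRCQ.exists_pos_mul_norm_le_norm_gradg {g : Em m → Mat n} {z : Em m × Mat n}
    (hS : SRCQ g z) {P : Mat n} {lam : Fin n → ℝ} (hdec : IsEigDecomp (Gmap g z) P lam) :
    ∃ c > 0, ∀ Ψ, memNormal P lam Ψ → Ψ.PosSemidef → c * ‖Ψ‖ ≤ ‖gradg g z.1 Ψ‖ := by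
  obtain ⟨c, hc, h⟩ := (gradgCLM g z.1).exists_pos_mul_norm_le_of_isClosed_cone
    (isClosed_setOf_memNormal_posSemidef P lam)
    (fun Ψ hΨ t ht => ⟨hΨ.1.smul t, hΨ.2.smul ht.le⟩)
    (fun Ψ hΨ => hS.eq_zero_of_gradg_eq_zero hdec hΨ.1 hΨ.2)
  exact ⟨c, hc, fun Ψ hΨ hpsd => h Ψ ⟨hΨ, hpsd⟩⟩

theorem SRCQ.exists_norm_le_mul {g : Em m → Mat n} {z : Em m × Mat n}
    (hS : SRCQ g z) {P : Mat n} {lam : Fin n → ℝ} (hdec : IsEigDecomp (Gmap g z) P lam) :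
    ∃ M, 1 ≤ M ∧ ∀ Δ, memNormal P lam Δ →
      ‖Δ‖ ≤ M * (‖piPlus Δ‖ + ‖gradg g z.1 Δ‖) := by
  obtain ⟨c, hc, hlow⟩ := hS.exists_pos_mul_norm_le_norm_gradg hdec
  obtain ⟨C, hC, hup⟩ := exists_norm_gradg_le g z.1
  have hCc : 0 ≤ (C + 1) / c := by positivity
  refine ⟨1 + (C + 1) / c, by linarith, fun Δ hΔ => ?_⟩
  obtain ⟨hmem, hpsd⟩ := memNormal_and_posSemidef_piPlus_sub_self hdec.1 hΔ
  have hneg : ‖piPlus Δ - Δ‖ ≤ (C * ‖piPlus Δ‖ + ‖gradg g z.1 Δ‖) / c := by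
    rw [le_div_iff₀ hc, mul_comm]
    calc c * ‖piPlus Δ - Δ‖ ≤ ‖gradg g z.1 (piPlus Δ - Δ)‖ := hlow _ hmem hpsd
      _ ≤ ‖gradg g z.1 (piPlus Δ)‖ + ‖gradg g z.1 Δ‖ := by
        rw [gradg_sub]
        exact norm_sub_le _ _
      _ ≤ C * ‖piPlus Δ‖ + ‖gradg g z.1 Δ‖ := by gcongr; exact hup _
  have hsplit : ‖Δ‖ ≤ ‖piPlus Δ‖ + ‖piPlus Δ - Δ‖ := by
    simpa using norm_sub_le (piPlus Δ) (piPlus Δ - Δ)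
  have hfrac : (C * ‖piPlus Δ‖ + ‖gradg g z.1 Δ‖) / c ≤
      (C + 1) / c * (‖piPlus Δ‖ + ‖gradg g z.1 Δ‖) := by
    rw [div_mul_eq_mul_div]
    gcongr
    nlinarith [norm_nonneg (piPlus Δ), norm_nonneg (gradg g z.1 Δ)]
  nlinarith [norm_nonneg (gradg g z.1 Δ)]

end Bounds

theorem Jmap_positively_homogeneous_and_bounded_general {m n : ℕ}
    (g : Em m → Mat n)
    (zbar : Em m × Mat n)
    (hS : SRCQ g zbar)
    (P : Mat n) (lam : Fin n → ℝ) (hdec : IsEigDecomp (Gmap g zbar) P lam) :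
    (∀ t : ℝ, 0 ≤ t → ∀ Δ : Mat n, memNormal P lam Δ →
        (gradg g zbar.1 (t • Δ), piPlus (t • Δ)) =
          t • ((gradg g zbar.1 Δ, piPlus Δ) : Em m × Mat n)) ∧
    ∃ c₁ c₂ : ℝ, 0 < c₁ ∧ c₁ < c₂ ∧
      ∀ Δ : Mat n, memNormal P lam Δ →
        c₁ * ‖Δ‖ ≤ pnorm (gradg g zbar.1 Δ, piPlus Δ) ∧
        pnorm (gradg g zbar.1 Δ, piPlus Δ) ≤ c₂ * ‖Δ‖ := by
  refine ⟨fun t ht Δ hΔ => Prod.ext (gradg_smul g zbar.1 t Δ) (piPlus_smul hΔ.1 ht), ?_⟩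
  obtain ⟨M, hM, hlow⟩ := hS.exists_norm_le_mul hdec
  obtain ⟨C, hC, hup⟩ := exists_norm_gradg_le g zbar.1
  refine ⟨(2 * M)⁻¹, C + 1, by positivity, ?_, fun Δ hΔ => ⟨?_, ?_⟩⟩
  · calc (2 * M)⁻¹ ≤ 2⁻¹ := inv_anti₀ two_pos (by linarith)
      _ < C + 1 := by linarith
  · have hfst := norm_fst_le_pnorm (gradg g zbar.1 Δ, piPlus Δ)
    have hsnd := norm_snd_le_pnorm (gradg g zbar.1 Δ, piPlus Δ)
    rw [inv_mul_le_iff₀ (by positivity)]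
    nlinarith [hlow Δ hΔ]
  · calc pnorm (gradg g zbar.1 Δ, piPlus Δ) ≤ ‖gradg g zbar.1 Δ‖ + ‖piPlus Δ‖ := pnorm_le_add _
      _ ≤ C * ‖Δ‖ + ‖Δ‖ := add_le_add (hup Δ) (norm_piPlus_le hΔ.1)
      _ = (C + 1) * ‖Δ‖ := by ring

/-- At a KKT pair `z̄ ∈ M̃_{p,q}` where the W-SOC and the SRCQ hold, the
map `J(Δ) = (∇g(x̄)Δ, Π₊(Δ))` on the normal space `N_{G(z̄)}M_{p,q}` is positively
homogeneous and satisfies `c₁‖Δ‖ ≤ ‖J(Δ)‖ ≤ c₂‖Δ‖` for some `0 < c₁ < c₂`. -/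
theorem Jmap_positively_homogeneous_and_bounded {m n p q : ℕ}
    (f : Em m → ℝ) (g : Em m → Mat n)
    (hf : ContDiff ℝ 2 f) (hg : ContDiff ℝ 2 g) (hgs : ∀ x, (g x).IsSymm)
    (zbar : Em m × Mat n)
    (hkkt : KKTF f g zbar = 0)
    (hz : zbar ∈ lstratum g p q)
    (hW : WSOC f g zbar) (hS : SRCQ g zbar)
    (P : Mat n) (lam : Fin n → ℝ) (hdec : IsEigDecomp (Gmap g zbar) P lam) :
    (∀ t : ℝ, 0 ≤ t → ∀ Δ : Mat n, memNormal P lam Δ →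
        (gradg g zbar.1 (t • Δ), piPlus (t • Δ)) =
          t • ((gradg g zbar.1 Δ, piPlus Δ) : Em m × Mat n)) ∧
    ∃ c₁ c₂ : ℝ, 0 < c₁ ∧ c₁ < c₂ ∧
      ∀ Δ : Mat n, memNormal P lam Δ →
        c₁ * ‖Δ‖ ≤ pnorm (gradg g zbar.1 Δ, piPlus Δ) ∧
        pnorm (gradg g zbar.1 Δ, piPlus Δ) ≤ c₂ * ‖Δ‖ :=
  Jmap_positively_homogeneous_and_bounded_general g zbar hS P lam hdec
end
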